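/- For every countable ordinal γ ≥ 1 and every ordinal ρ, the ρ-th Cantor–Bendixson derived set of the ordinal space [1, ω^γ] (with order topology) equals { ξ ∈ [1, ω^γ] : ω^ρ divides ξ }, i.e., the set of ordinals of the form ω^ρ · δ with δ ≥ 1 that lie in [1, ω^γ]. In particular, [1, ω^γ]^(γ) = {ω^γ}. -/

import Mathlib

open Topology Ordinal

/-- The `o`-th Cantor–Bendixson derived set of `A`. -/
noncomputable def cbIter {X : Type*} [TopologicalSpace X] (A : Set X) (o : Ordinal) : Set X :=
  Ordinal.limitRecOn o A (fun _ S => {x | AccPt x (Filter.principal S)})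
    (fun o _ ih => ⋂ i : {b : Ordinal // b < o}, ih i.1 i.2)

/-!
Between consecutive multiples `b * q < b * (q + 1)` of an ordinal `b ≠ 0` there is no other
multiple, while `b * (ω * c)` is the supremum of the `b * d` with `d < ω * c`. Hence the
accumulation points of the multiples of `b` are the nonzero multiples of `b * ω`; for
`b = ω ^ ρ` the derived set operation turns divisibility by `ω ^ ρ` into divisibility by
`ω ^ (ρ + 1)`. At a limit `ρ`, divisibility by every `ω ^ b` with `b < ρ` forces divisibility
by `ω ^ ρ`. Since `[1, ω ^ γ]` is open in the ordinals, its accumulation points are computed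
in the ambient space.
-/

open Set Filter Order

section CantorBendixson

variable {X : Type*} [TopologicalSpace X] (A : Set X)

theorem cbIter_zero : cbIter A 0 = A := by
  rw [cbIter, limitRecOn_zero]

theorem cbIter_add_one (o : Ordinal) : cbIter A (o + 1) = {x | AccPt x (𝓟 (cbIter A o))} := by
  rw [cbIter, limitRecOn_add_one]
  rfl

theorem cbIter_limit {o : Ordinal} (ho : IsSuccLimit o) :
    cbIter A o = ⋂ i : {b : Ordinal // b < o}, cbIter A i.1 := by
  rw [cbIter, limitRecOn_limit _ _ _ _ ho]
  rfl

end CantorBendixson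

namespace Ordinal

theorem not_dvd_of_lt_of_lt_mul_succ {b q y : Ordinal} (hq : b * q < y) (hy : y < b * succ q) :
    ¬ b ∣ y := by
  rintro ⟨m, rfl⟩
  have hb : 0 < b := pos_of_ne_zero (by rintro rfl; simp at hy)
  have hqm : q < m := (mul_lt_mul_iff_of_pos_left hb).mp hq
  have hmq : m < succ q := (mul_lt_mul_iff_of_pos_left hb).mp hy
  exact (succ_le_of_lt hqm).not_gt hmq

theorem accPt_setOf_dvd_iff {b x : Ordinal} (hb : b ≠ 0) :
    AccPt x (𝓟 {y | b ∣ y}) ↔ x ≠ 0 ∧ b * ω ∣ x := by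
  have hb' : 0 < b := pos_of_ne_zero hb
  rw [SuccOrder.accPt_principal, isMin_iff_eq_bot, bot_eq_zero]
  constructor
  · rintro ⟨hx, hnear⟩
    have no_multiple_below : ∀ {q}, b * q < x → x ≤ b * succ q → False := fun hq hx' => by
      obtain ⟨y, hy, hqy, hyx⟩ := hnear _ hq
      exact not_dvd_of_lt_of_lt_mul_succ hqy (hyx.trans_le hx') hy
    obtain ⟨q, rfl⟩ : b ∣ x := ⟨x / b, ((mul_div_le x b).lt_or_eq.resolve_left
      fun h => no_multiple_below h (lt_mul_succ_div x hb).le).symm⟩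
    have hq : IsSuccLimit q := by
      rcases zero_or_succ_or_isSuccLimit q with rfl | ⟨q', rfl⟩ | hq
      · simp at hx
      · exact (no_multiple_below ((mul_lt_mul_iff_of_pos_left hb').mpr (lt_succ q')) le_rfl).elim
      · exact hq
    exact ⟨hx, mul_dvd_mul_left b (isSuccPrelimit_iff_omega0_dvd.mp hq.isSuccPrelimit)⟩
  · rintro ⟨hx, c, rfl⟩
    have hc : c ≠ 0 := by rintro rfl; simp at hx
    have hlim : IsSuccLimit (ω * c) :=
      ⟨not_isMin_iff_ne_bot.mpr (mul_ne_zero omega0_ne_zero hc),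
      isSuccPrelimit_iff_omega0_dvd.mpr (dvd_mul_right ω c)⟩
    refine ⟨hx, fun p hp => ?_⟩
    rw [mul_assoc, lt_mul_iff_of_isSuccLimit hlim] at hp
    obtain ⟨d, hd, hpd⟩ := hp
    refine ⟨b * d, dvd_mul_right b d, hpd, ?_⟩
    rw [mul_assoc]
    exact (mul_lt_mul_iff_of_pos_left hb').mpr hd

theorem opow_dvd_of_isSuccLimit {a ρ x : Ordinal} (ha : a ≠ 0) (hρ : IsSuccLimit ρ)
    (h : ∀ b < ρ, a ^ b ∣ x) : a ^ ρ ∣ x := by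
  rw [dvd_iff_mod_eq_zero]
  by_contra hr
  obtain ⟨b, hb, hlt⟩ := (lt_opow_of_isSuccLimit ha hρ).mp (mod_lt x (opow_ne_zero ρ ha))
  have hquot : a ^ b ∣ a ^ ρ * (x / a ^ ρ) := dvd_mul_of_dvd_left (opow_dvd_opow a hb.le) _
  have hrem : a ^ b ∣ x % a ^ ρ := (dvd_add_iff hquot).mp (by rw [div_add_mod]; exact h b hb)
  exact hlt.not_ge (le_of_dvd hr hrem)

theorem isOpen_Icc_one (a : Ordinal) : IsOpen (Icc 1 a) := by
  convert isOpen_Ioo (a := (0 : Ordinal)) (b := succ a) using 1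
  ext
  simp [one_le_iff_pos]

end Ordinal

theorem cbIter_univ_eq_setOf_opow_dvd {U : Set Ordinal} (hU : IsOpen U) (h0 : 0 ∉ U)
    (ρ : Ordinal) : cbIter (univ : Set U) ρ = {ξ : U | ω ^ ρ ∣ (ξ : Ordinal)} := by
  induction ρ using limitRecOn with
  | zero => simp [cbIter_zero]
  | add_one o ih =>
    ext ξ
    have hξ : (ξ : Ordinal) ≠ 0 := fun h => h0 (h ▸ ξ.2)
    rw [cbIter_add_one, ih, mem_ofPred_eq, mem_ofPred_eq, ← preimage_ofPred_eq, ← comap_principal,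
      hU.isOpenEmbedding_subtypeVal.accPt_comap_iff,
      accPt_setOf_dvd_iff (opow_ne_zero o omega0_ne_zero), ← opow_succ, succ_eq_add_one]
    exact and_iff_right hξ
  | limit o ho ih =>
    rw [cbIter_limit _ ho, iInter_congr fun i : {b // b < o} => ih i.1 i.2]
    ext ξ
    simp only [mem_iInter, Subtype.forall, mem_ofPred_eq]
    exact ⟨opow_dvd_of_isSuccLimit omega0_ne_zero ho,
      fun h b hb => (opow_dvd_opow ω hb.le).trans h⟩

theorem stmt1_general (γ : Ordinal) (ρ : Ordinal) :
    cbIter (Set.univ : Set ↥(Set.Icc (1 : Ordinal) (ω ^ γ))) ρ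
        = {ξ : ↥(Set.Icc (1 : Ordinal) (ω ^ γ)) | ω ^ ρ ∣ (ξ : Ordinal)} ∧
      cbIter (Set.univ : Set ↥(Set.Icc (1 : Ordinal) (ω ^ γ))) γ
        = {ξ : ↥(Set.Icc (1 : Ordinal) (ω ^ γ)) | (ξ : Ordinal) = ω ^ γ} := by
  have h0 : (0 : Ordinal) ∉ Icc 1 (ω ^ γ) := fun h => by simpa using h.1
  have hdiv := cbIter_univ_eq_setOf_opow_dvd (isOpen_Icc_one (ω ^ γ)) h0
  refine ⟨hdiv ρ, ?_⟩
  rw [hdiv γ]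
  ext ξ
  have hξ : (ξ : Ordinal) ≠ 0 := fun h => h0 (h ▸ ξ.2)
  exact ⟨fun h => le_antisymm ξ.2.2 (le_of_dvd hξ h), fun h => dvd_of_eq h.symm⟩

/-- For a countable ordinal `γ ≥ 1` and any ordinal `ρ`, the `ρ`-th Cantor–Bendixson
derived set of `[1, ω^γ]` is the set of points divisible by `ω^ρ`; in particular the
`γ`-th derived set is `{ω^γ}`. -/
theorem stmt1 (γ : Ordinal) (hγ1 : 1 ≤ γ) (hγc : γ.card ≤ Cardinal.aleph0) (ρ : Ordinal) :
    cbIter (Set.univ : Set ↥(Set.Icc (1 : Ordinal) (ω ^ γ))) ρ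
        = {ξ : ↥(Set.Icc (1 : Ordinal) (ω ^ γ)) | ω ^ ρ ∣ (ξ : Ordinal)} ∧
      cbIter (Set.univ : Set ↥(Set.Icc (1 : Ordinal) (ω ^ γ))) γ
        = {ξ : ↥(Set.Icc (1 : Ordinal) (ω ^ γ)) | (ξ : Ordinal) = ω ^ γ} :=
  stmt1_general γ ρ
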